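/- arXiv:1111.0340 — 3 statements merged into one kernel-verified Lean document; each statement's English description precedes it below -/
import Mathlib

section
/- Let z₀ > −1 and define l(y) := h(z₀ + y) − h(z₀) − h'(z₀)·y for y > −1 − z₀, where h'(z₀) = log(1+z₀). Then for every p ∈ ℝ, sup over y > −1 − z₀ of ( p·y − l(y) ) equals (1 + z₀)·(e^p − p − 1); that is, the Legendre dual of the translated entropy integrand l is l*(p) = (1+z₀)·h*(p). -/
open Real

/-- The relative-entropy integrand `h(z) = (1+z)·log(1+z) − z`. -/
noncomputable def entH (z : ℝ) : ℝ := (1 + z) * Real.log (1 + z) - z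

/-!
Writing `a = 1 + z₀` and `u = a + y > 0`, the translated integrand becomes the relative entropy
`l(y) = u log (u / a) - y`. Then `p y - l(y) = u (p + 1 - log (u / a)) - a`, and `x + 1 ≤ eˣ` at
`x = p - log (u / a)` bounds this by `a eᵖ - a - a p`, with equality exactly at `u = a eᵖ`.
-/

lemma mul_add_one_sub_log_div_le {a u : ℝ} (ha : 0 < a) (hu : 0 < u) (p : ℝ) :
    u * (p + 1 - Real.log (u / a)) ≤ a * Real.exp p :=
  calc u * (p + 1 - Real.log (u / a))
      ≤ u * Real.exp (p - Real.log (u / a)) := by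
        gcongr
        linarith [Real.add_one_le_exp (p - Real.log (u / a))]
    _ = a * Real.exp p := by
        rw [Real.exp_sub, Real.exp_log (div_pos hu ha)]
        field_simp

lemma entH_add_sub_entH_sub_log_mul {z₀ y : ℝ} (hz₀ : -1 < z₀) (hy : -1 - z₀ < y) :
    entH (z₀ + y) - entH z₀ - Real.log (1 + z₀) * y =
      (1 + z₀ + y) * Real.log ((1 + z₀ + y) / (1 + z₀)) - y := by
  rw [Real.log_div (by linarith) (by linarith), entH, entH, ← add_assoc]
  ring

lemma isGreatest_mul_sub_translated_entH {z₀ : ℝ} (hz₀ : -1 < z₀) (p : ℝ) :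
    IsGreatest {r : ℝ | ∃ y : ℝ, -1 - z₀ < y ∧
        r = p * y - (entH (z₀ + y) - entH z₀ - Real.log (1 + z₀) * y)}
      ((1 + z₀) * (Real.exp p - p - 1)) := by
  have ha : 0 < 1 + z₀ := by linarith
  constructor
  · refine ⟨(1 + z₀) * (Real.exp p - 1), ?_, ?_⟩
    · nlinarith [Real.exp_pos p]
    · have hu : 1 + z₀ + (1 + z₀) * (Real.exp p - 1) = (1 + z₀) * Real.exp p := by ring
      rw [entH_add_sub_entH_sub_log_mul hz₀ (by nlinarith [Real.exp_pos p]), hu,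
        mul_div_cancel_left₀ _ ha.ne', Real.log_exp]
      ring
  · rintro r ⟨y, hy, rfl⟩
    have hu : 0 < 1 + z₀ + y := by linarith
    have := mul_add_one_sub_log_div_le ha hu p
    rw [entH_add_sub_entH_sub_log_mul hz₀ hy]
    linarith

/-- For `z₀ > −1`, the Legendre dual of the translated entropy integrand
`l(y) = h(z₀+y) − h(z₀) − h'(z₀)·y` (for `y > −1−z₀`, with `h'(z₀) = log(1+z₀)`)
is `l*(p) = (1+z₀)·(eᵖ − p − 1) = (1+z₀)·h*(p)`. -/
theorem legendre_dual_of_translated_entropy_integrand (z₀ : ℝ) (hz₀ : -1 < z₀) (p : ℝ) :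
    sSup {r : ℝ | ∃ y : ℝ, -1 - z₀ < y ∧
        r = p * y - (entH (z₀ + y) - entH z₀ - Real.log (1 + z₀) * y)} =
      (1 + z₀) * (Real.exp p - p - 1) :=
  (isGreatest_mul_sub_translated_entH hz₀ p).csSup_eq
end

section
/- Let n ∈ ℝ^N be a unit vector, α ∈ [0,1], and let F : ℝ^N → [0,∞) be measurable with ∫ F(v)(1+|v|) dv < ∞. Assume F satisfies Maxwell's accommodation condition: F(v) = (1−α) F(v − 2(v·n)n) + α ( √(2π) ∫_{ℝ^N} F(w)(w·n)₊ dw ) M(v) for a.e. v with v·n < 0. Then the normal mass flux vanishes: ∫_{ℝ^N} F(v) (v·n) dv = 0. -/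
/-!
Split the normal flux into the outgoing part `Λ = ∫ F (v·n)₊` and the incoming part
`∫ F (v·n)₋`. On the incoming half-space the accommodation condition writes `F` through the
specular reflection, a measure-preserving isometry that exchanges `(v·n)₋` and `(v·n)₊`, and
through the Gaussian, whose incoming flux is `1/√(2π)` (rotate `n` onto a coordinate axis, where
`M` factorises into one-dimensional densities). Hence the incoming flux is `(1 - α) Λ + α Λ = Λ`.
-/

open MeasureTheory Real Set
open scoped RealInnerProductSpace

/-- The standard Gaussian density `M(v) = (2π)^{−N/2} exp(−|v|²/2)` on `ℝ^N`. -/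
noncomputable def gaussM {N : ℕ} (v : EuclideanSpace ℝ (Fin N)) : ℝ :=
  (2 * π) ^ (-(N : ℝ) / 2) * Real.exp (-‖v‖ ^ 2 / 2)

open ProbabilityTheory

theorem MeasureTheory.Integrable.mul_of_norm_le_one_add_norm {E : Type*} [NormedAddCommGroup E]
    [MeasurableSpace E] [OpensMeasurableSpace E] {μ : Measure E} {F φ : E → ℝ}
    (hF : Integrable (fun v => F v * (1 + ‖v‖)) μ) (hφ : AEStronglyMeasurable φ μ)
    (hφ_le : ∀ v, ‖φ v‖ ≤ 1 + ‖v‖) : Integrable (fun v => F v * φ v) μ := by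
  have hpos : ∀ v : E, 0 < 1 + ‖v‖ := fun v => by positivity
  refine (hF.mul_bdd (c := 1) (hφ.mul (measurable_norm.const_add 1).inv.aestronglyMeasurable)
    (.of_forall fun v => ?_)).congr (.of_forall fun v => ?_)
  · rw [Pi.mul_apply, Pi.inv_apply, norm_mul, norm_inv, Real.norm_of_nonneg (hpos v).le]
    exact mul_inv_le_one_of_le₀ (hφ_le v) (hpos v).le
  · simp only [Pi.mul_apply, Pi.inv_apply]
    field_simp [(hpos v).ne']

section InnerProductSpace

variable {E : Type*} [NormedAddCommGroup E] [InnerProductSpace ℝ E]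

theorem MeasureTheory.Integrable.mul_max_inner_zero [MeasurableSpace E] [OpensMeasurableSpace E]
    {μ : Measure E} {F : E → ℝ} (hF : Integrable (fun v => F v * (1 + ‖v‖)) μ) {n : E}
    (hn : ‖n‖ ≤ 1) : Integrable (fun v => F v * max ⟪v, n⟫ 0) μ := by
  refine hF.mul_of_norm_le_one_add_norm
    ((continuous_id.inner continuous_const).max continuous_const).measurable.aestronglyMeasurable
    fun v => ?_
  calc ‖max ⟪v, n⟫ 0‖ ≤ ‖⟪v, n⟫‖ := by
        rw [Real.norm_eq_abs, Real.norm_eq_abs]; exact abs_max_le_max_abs_abs.trans (by simp)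
    _ ≤ ‖v‖ * ‖n‖ := norm_inner_le_norm v n
    _ ≤ 1 + ‖v‖ := by nlinarith [norm_nonneg v]

theorem reflection_orthogonal_singleton_apply {n : E} (hn : ‖n‖ = 1) (v : E) :
    (ℝ ∙ n)ᗮ.reflection v = v - (2 * ⟪v, n⟫) • n := by
  rw [Submodule.reflection_orthogonal_apply, Submodule.reflection_singleton_apply, hn,
    real_inner_comm]
  module

theorem inner_reflection_orthogonal_singleton (n v : E) :
    ⟪(ℝ ∙ n)ᗮ.reflection v, n⟫ = -⟪v, n⟫ := by
  calc ⟪(ℝ ∙ n)ᗮ.reflection v, n⟫ = ⟪(ℝ ∙ n)ᗮ.reflection v, (ℝ ∙ n)ᗮ.reflection (-n)⟫ := by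
        rw [map_neg, Submodule.reflection_orthogonalComplement_singleton_eq_neg, neg_neg]
    _ = -⟪v, n⟫ := by rw [LinearIsometryEquiv.inner_map_map, inner_neg_right]

variable [FiniteDimensional ℝ E] [MeasurableSpace E] [BorelSpace E]

theorem MeasureTheory.Integrable.comp_reflection_mul_max_neg_inner {g : E → ℝ} {n : E}
    (hg : Integrable fun v => g v * max ⟪v, n⟫ 0) :
    Integrable fun v => g ((ℝ ∙ n)ᗮ.reflection v) * max (-⟪v, n⟫) 0 := by
  have R_emb := ((ℝ ∙ n)ᗮ.reflection).toMeasurableEquiv.measurableEmbedding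
  simpa only [Function.comp_def, inner_reflection_orthogonal_singleton] using
    (((ℝ ∙ n)ᗮ.reflection).measurePreserving.integrable_comp_emb R_emb).2 hg

theorem integral_comp_reflection_mul_max_neg_inner (g : E → ℝ) (n : E) :
    ∫ v, g ((ℝ ∙ n)ᗮ.reflection v) * max (-⟪v, n⟫) 0 = ∫ v, g v * max ⟪v, n⟫ 0 := by
  have R_emb := ((ℝ ∙ n)ᗮ.reflection).toMeasurableEquiv.measurableEmbedding
  simpa only [inner_reflection_orthogonal_singleton] using
    ((ℝ ∙ n)ᗮ.reflection).measurePreserving.integral_comp R_emb fun w => g w * max ⟪w, n⟫ 0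

end InnerProductSpace

theorem integral_Ioi_mul_exp_neg_sq_div_two : ∫ t in Ioi (0 : ℝ), t * exp (-t ^ 2 / 2) = 1 := by
  have h := integral_mul_cexp_neg_mul_sq (b := 1 / 2) (by norm_num)
  norm_num at h
  apply Complex.ofReal_injective
  rw [← integral_complex_ofReal, Complex.ofReal_one, ← h]
  refine setIntegral_congr_fun measurableSet_Ioi fun t _ => ?_
  push_cast
  ring_nf

theorem gaussianPDFReal_zero_one (t : ℝ) :
    gaussianPDFReal 0 1 t = (√(2 * π))⁻¹ * exp (-t ^ 2 / 2) := by
  simp [gaussianPDFReal]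

theorem gaussianPDFReal_zero_one_mul_max_zero_eq_indicator :
    (fun t => gaussianPDFReal 0 1 t * max t 0)
      = (Ioi 0).indicator fun t => (√(2 * π))⁻¹ * (t * exp (-t ^ 2 / 2)) := by
  ext t
  rcases lt_or_ge 0 t with ht | ht
  · rw [indicator_of_mem (mem_Ioi.2 ht), max_eq_left ht.le, gaussianPDFReal_zero_one]; ring
  · rw [indicator_of_notMem (notMem_Ioi.2 ht), max_eq_right ht, mul_zero]

theorem integrable_gaussianPDFReal_zero_one_mul_max_zero :
    Integrable fun t => gaussianPDFReal 0 1 t * max t 0 := by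
  rw [gaussianPDFReal_zero_one_mul_max_zero_eq_indicator]
  refine Integrable.indicator ?_ measurableSet_Ioi
  refine ((integrable_mul_exp_neg_mul_sq (b := 1 / 2) (by norm_num)).const_mul (√(2 * π))⁻¹).congr
    (.of_forall fun t => ?_)
  ring_nf

theorem integral_gaussianPDFReal_zero_one_mul_max_zero :
    ∫ t, gaussianPDFReal 0 1 t * max t 0 = (√(2 * π))⁻¹ := by
  rw [gaussianPDFReal_zero_one_mul_max_zero_eq_indicator, integral_indicator measurableSet_Ioi,
    integral_const_mul, integral_Ioi_mul_exp_neg_sq_div_two, mul_one]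

theorem EuclideanSpace.integrable_fintype_prod {ι : Type*} [Fintype ι] {f : ι → ℝ → ℝ}
    (hf : ∀ i, Integrable (f i)) :
    Integrable fun v : EuclideanSpace ℝ ι => ∏ i, f i (v i) :=
  (PiLp.volume_preserving_ofLp ι).integrable_comp_emb
    (MeasurableEquiv.toLp 2 (ι → ℝ)).symm.measurableEmbedding |>.mpr (Integrable.fintype_prod hf)

theorem EuclideanSpace.integral_fintype_prod_eq_prod {ι : Type*} [Fintype ι] (f : ι → ℝ → ℝ) :
    ∫ v : EuclideanSpace ℝ ι, ∏ i, f i (v i) = ∏ i, ∫ t, f i t := by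
  rw [← integral_fintype_prod_volume_eq_prod]
  exact (EuclideanSpace.volume_preserving_symm_measurableEquiv_toLp ι).integral_comp'
    (g := fun x : ι → ℝ => ∏ i, f i (x i))

section Gaussian

variable {N : ℕ}

theorem gaussM_eq_prod (v : EuclideanSpace ℝ (Fin N)) :
    gaussM v = ∏ i, gaussianPDFReal 0 1 (v i) := by
  simp_rw [gaussianPDFReal_zero_one, Finset.prod_mul_distrib, ← Real.exp_sum, Finset.prod_const,
    Finset.card_univ, Fintype.card_fin, gaussM, EuclideanSpace.real_norm_sq_eq, ← Finset.sum_div,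
    Finset.sum_neg_distrib]
  congr 1
  rw [Real.sqrt_eq_rpow, ← Real.rpow_neg_one, ← Real.rpow_mul (by positivity), ← Real.rpow_natCast,
    ← Real.rpow_mul (by positivity)]
  ring_nf

theorem gaussM_linearIsometryEquiv_apply
    (T : EuclideanSpace ℝ (Fin N) ≃ₗᵢ[ℝ] EuclideanSpace ℝ (Fin N)) (v : EuclideanSpace ℝ (Fin N)) :
    gaussM (T v) = gaussM v := by
  rw [gaussM, gaussM, T.norm_map]

theorem gaussM_mul_max_apply_zero_eq_prod (i : Fin N) (v : EuclideanSpace ℝ (Fin N)) :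
    gaussM v * max (v i) 0
      = ∏ j, gaussianPDFReal 0 1 (v j) * if j = i then max (v j) 0 else 1 := by
  rw [Finset.prod_mul_distrib, Finset.prod_ite_eq', gaussM_eq_prod, if_pos (Finset.mem_univ i)]

theorem integrable_gaussM_mul_max_apply_zero (i : Fin N) :
    Integrable fun v : EuclideanSpace ℝ (Fin N) => gaussM v * max (v i) 0 := by
  simp_rw [gaussM_mul_max_apply_zero_eq_prod i]
  refine EuclideanSpace.integrable_fintype_prod
    (f := fun j t => gaussianPDFReal 0 1 t * if j = i then max t 0 else 1) fun j => ?_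
  split_ifs
  · exact integrable_gaussianPDFReal_zero_one_mul_max_zero
  · simpa using integrable_gaussianPDFReal 0 1

theorem integral_gaussM_mul_max_apply_zero (i : Fin N) :
    ∫ v : EuclideanSpace ℝ (Fin N), gaussM v * max (v i) 0 = (√(2 * π))⁻¹ := by
  simp_rw [gaussM_mul_max_apply_zero_eq_prod i]
  rw [EuclideanSpace.integral_fintype_prod_eq_prod
    (fun j t => gaussianPDFReal 0 1 t * if j = i then max t 0 else 1),
    ← Finset.prod_erase_mul _ _ (Finset.mem_univ i), Finset.prod_eq_one, one_mul]
  · simpa using integral_gaussianPDFReal_zero_one_mul_max_zero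
  · intro j hj
    simp [Finset.ne_of_mem_erase hj, integral_gaussianPDFReal_eq_one]

theorem exists_linearIsometryEquiv_single_eq {u : EuclideanSpace ℝ (Fin N)} (hu : ‖u‖ = 1) :
    ∃ (i : Fin N) (T : EuclideanSpace ℝ (Fin N) ≃ₗᵢ[ℝ] EuclideanSpace ℝ (Fin N)),
      T (EuclideanSpace.single i 1) = u := by
  obtain ⟨i⟩ : Nonempty (Fin N) := by
    rcases isEmpty_or_nonempty (Fin N) with h | h
    · simp [Subsingleton.elim u 0] at hu
    · exact h
  exact ⟨i, _, Submodule.reflection_sub (by simp [hu])⟩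

theorem gaussM_mul_max_inner_zero_comp {i : Fin N} {u : EuclideanSpace ℝ (Fin N)}
    {T : EuclideanSpace ℝ (Fin N) ≃ₗᵢ[ℝ] EuclideanSpace ℝ (Fin N)}
    (hT : T (EuclideanSpace.single i 1) = u) (v : EuclideanSpace ℝ (Fin N)) :
    gaussM (T v) * max ⟪T v, u⟫ 0 = gaussM v * max (v i) 0 := by
  rw [gaussM_linearIsometryEquiv_apply, ← hT, LinearIsometryEquiv.inner_map_map,
    EuclideanSpace.inner_single_right]
  simp

theorem integrable_gaussM_mul_max_inner_zero {u : EuclideanSpace ℝ (Fin N)} (hu : ‖u‖ = 1) :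
    Integrable fun v => gaussM v * max ⟪v, u⟫ 0 := by
  obtain ⟨i, T, hT⟩ := exists_linearIsometryEquiv_single_eq hu
  rw [← T.measurePreserving.integrable_comp_emb T.toMeasurableEquiv.measurableEmbedding]
  simpa only [Function.comp_def, gaussM_mul_max_inner_zero_comp hT]
    using integrable_gaussM_mul_max_apply_zero i

theorem integral_gaussM_mul_max_inner_zero {u : EuclideanSpace ℝ (Fin N)} (hu : ‖u‖ = 1) :
    ∫ v, gaussM v * max ⟪v, u⟫ 0 = (√(2 * π))⁻¹ := by
  obtain ⟨i, T, hT⟩ := exists_linearIsometryEquiv_single_eq hu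
  rw [← T.measurePreserving.integral_comp T.toMeasurableEquiv.measurableEmbedding]
  simpa only [gaussM_mul_max_inner_zero_comp hT] using integral_gaussM_mul_max_apply_zero i

end Gaussian

theorem integral_mul_max_neg_inner_eq_of_accommodation {N : ℕ}
    {n : EuclideanSpace ℝ (Fin N)} (hn : ‖n‖ = 1) {α : ℝ} {F : EuclideanSpace ℝ (Fin N) → ℝ}
    (hFint : Integrable fun v => F v * (1 + ‖v‖))
    (hacc : ∀ᵐ v : EuclideanSpace ℝ (Fin N), ⟪v, n⟫ < 0 →
      F v = (1 - α) * F (v - (2 * ⟪v, n⟫) • n)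
        + α * (√(2 * π) * ∫ w, F w * max ⟪w, n⟫ 0) * gaussM v) :
    ∫ v, F v * max (-⟪v, n⟫) 0 = ∫ v, F v * max ⟪v, n⟫ 0 := by
  have hn' : ‖-n‖ = 1 := by rw [norm_neg, hn]
  have hM_int : Integrable fun v => gaussM v * max (-⟪v, n⟫) 0 := by
    simpa only [inner_neg_right] using integrable_gaussM_mul_max_inner_zero hn'
  have hM : ∫ v, gaussM v * max (-⟪v, n⟫) 0 = (√(2 * π))⁻¹ := by
    simpa only [inner_neg_right] using integral_gaussM_mul_max_inner_zero hn'
  have hsplit : (fun v => F v * max (-⟪v, n⟫) 0) =ᵐ[volume] fun v =>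
      (1 - α) * (F ((ℝ ∙ n)ᗮ.reflection v) * max (-⟪v, n⟫) 0)
        + α * √(2 * π) * (∫ w, F w * max ⟪w, n⟫ 0) * (gaussM v * max (-⟪v, n⟫) 0) := by
    filter_upwards [hacc] with v hv
    rcases lt_or_ge ⟪v, n⟫ 0 with h | h
    · rw [hv h, reflection_orthogonal_singleton_apply hn]
      ring
    · simp [h]
  have hreflected := (hFint.mul_max_inner_zero hn.le).comp_reflection_mul_max_neg_inner
  rw [integral_congr_ae hsplit, integral_add (hreflected.const_mul _) (hM_int.const_mul _),
    integral_const_mul, integral_const_mul, integral_comp_reflection_mul_max_neg_inner, hM]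
  field_simp
  ring

theorem accommodation_implies_zero_normal_mass_flux_general {N : ℕ}
    (n : EuclideanSpace ℝ (Fin N)) (hn : ‖n‖ = 1)
    (α : ℝ)
    (F : EuclideanSpace ℝ (Fin N) → ℝ)
    (hFint : Integrable fun v => F v * (1 + ‖v‖))
    (hacc : ∀ᵐ v : EuclideanSpace ℝ (Fin N), ⟪v, n⟫ < 0 →
      F v = (1 - α) * F (v - (2 * ⟪v, n⟫) • n)
        + α * (Real.sqrt (2 * π) * ∫ w, F w * max ⟪w, n⟫ 0) * gaussM v) :
    (∫ v, F v * ⟪v, n⟫) = 0 := by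
  have hout : Integrable fun v => F v * max ⟪v, n⟫ 0 := hFint.mul_max_inner_zero hn.le
  have hin : Integrable fun v => F v * max (-⟪v, n⟫) 0 := by
    simpa only [inner_neg_right] using hFint.mul_max_inner_zero (n := -n) (by rw [norm_neg, hn])
  calc ∫ v, F v * ⟪v, n⟫ = (∫ v, F v * max ⟪v, n⟫ 0) - ∫ v, F v * max (-⟪v, n⟫) 0 := by
        rw [← integral_sub hout hin]
        simp_rw [← mul_sub, max_zero_sub_max_neg_zero_eq_self]
    _ = 0 := by rw [integral_mul_max_neg_inner_eq_of_accommodation hn hFint hacc, sub_self]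

/-- If a nonnegative integrable (against `1+|v|`) distribution `F` satisfies
Maxwell's accommodation condition at a boundary point with outward unit normal `n`
and accommodation parameter `α ∈ [0,1]`, then the normal mass flux vanishes:
`∫ F(v)(v·n) dv = 0`. -/
theorem accommodation_implies_zero_normal_mass_flux {N : ℕ}
    (n : EuclideanSpace ℝ (Fin N)) (hn : ‖n‖ = 1)
    (α : ℝ) (hα : α ∈ Set.Icc (0 : ℝ) 1)
    (F : EuclideanSpace ℝ (Fin N) → ℝ) (hFmeas : Measurable F)
    (hFnonneg : ∀ v, 0 ≤ F v)
    (hFint : Integrable fun v => F v * (1 + ‖v‖))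
    (hacc : ∀ᵐ v : EuclideanSpace ℝ (Fin N), ⟪v, n⟫ < 0 →
      F v = (1 - α) * F (v - (2 * ⟪v, n⟫) • n)
        + α * (Real.sqrt (2 * π) * ∫ w, F w * max ⟪w, n⟫ 0) * gaussM v) :
    (∫ v, F v * ⟪v, n⟫) = 0 :=
  accommodation_implies_zero_normal_mass_flux_general n hn α F hFint hacc
end

section
/- Let n ∈ ℝ^N be a unit vector, α ∈ [0,1], u ∈ ℝ^N with u·n = 0, and let F : ℝ^N → [0,∞) be measurable with ∫ F(v)(1+|v|²) dv < ∞. Assume F satisfies Maxwell's accommodation condition: F(v) = (1−α) F(v − 2(v·n)n) + α ( √(2π) ∫_{ℝ^N} F(w)(w·n)₊ dw ) M(v) for a.e. v with v·n < 0. Then the tangential momentum flux reduces to α times its outgoing part: ∫_{ℝ^N} (u·v)(v·n) F(v) dv = α ∫_{ℝ^N} (u·v)(v·n)₊ F(v) dv. -/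
open MeasureTheory Real Set
open scoped RealInnerProductSpace

/-!
Split the flux at the wall into its outgoing (`v·n > 0`) and incoming (`v·n < 0`) parts. On the
incoming half the accommodation condition writes `F` as `(1 - α) F ∘ R + β M`, where `R` is the
specular reflection in `nᗮ`. Since `R` preserves Lebesgue measure, `u·R v = u·v` and
`R v·n = -v·n`, the specular term contributes minus the outgoing flux. The Maxwellian term
contributes nothing: `M` and `v·n` are invariant under the reflection in `uᗮ`, which flips the sign
of `u·v`. So the incoming flux is `-(1 - α)` times the outgoing one.
-/

theorem MeasureTheory.Integrable.mul_of_abs_le_mul_one_add_sq {E : Type*} [NormedAddCommGroup E]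
    [MeasurableSpace E] {μ : Measure E} {F φ : E → ℝ} {C : ℝ}
    (hF : Integrable (fun v => F v * (1 + ‖v‖ ^ 2)) μ)
    (hFm : AEStronglyMeasurable F μ) (hφm : AEStronglyMeasurable φ μ)
    (hφ : ∀ v, |φ v| ≤ C * (1 + ‖v‖ ^ 2)) : Integrable (fun v => φ v * F v) μ := by
  refine (hF.norm.const_mul C).mono' (hφm.mul hFm) (ae_of_all _ fun v => ?_)
  rw [Real.norm_eq_abs, Real.norm_eq_abs, abs_mul, abs_mul,
    abs_of_pos (by positivity : (0 : ℝ) < 1 + ‖v‖ ^ 2)]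
  calc |φ v| * |F v| ≤ C * (1 + ‖v‖ ^ 2) * |F v| := by gcongr; exact hφ v
    _ = C * (|F v| * (1 + ‖v‖ ^ 2)) := by ring

variable {E : Type*} [NormedAddCommGroup E] [InnerProductSpace ℝ E]

namespace Submodule

theorem inner_reflection_left_of_mem (K : Submodule ℝ E) [K.HasOrthogonalProjection]
    {x : E} (hx : x ∈ K) (v : E) : ⟪K.reflection v, x⟫ = ⟪v, x⟫ := by
  rw [← K.reflection.inner_map_map v x, reflection_mem_subspace_eq_self hx]

theorem inner_reflection_left_of_mem_orthogonal (K : Submodule ℝ E) [K.HasOrthogonalProjection]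
    {x : E} (hx : x ∈ Kᗮ) (v : E) : ⟪K.reflection v, x⟫ = -⟪v, x⟫ := by
  rw [← K.reflection.inner_map_map v x, reflection_mem_subspace_orthogonalComplement_eq_neg hx,
    inner_neg_right, neg_neg]

theorem reflection_orthogonal_singleton_apply_of_norm_eq_one {a : E} (ha : ‖a‖ = 1) (v : E) :
    (ℝ ∙ a)ᗮ.reflection v = v - (2 * ⟪v, a⟫) • a := by
  rw [reflection_orthogonal_apply, reflection_singleton_apply, ha, real_inner_comm]
  simp only [RCLike.ofReal_one, one_pow, div_one]
  module

end Submodule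

theorem abs_inner_mul_le_mul_one_add_sq (u n v : E) {x : ℝ} (hx : |x| ≤ |⟪v, n⟫|) :
    |⟪u, v⟫ * x| ≤ ‖u‖ * ‖n‖ * (1 + ‖v‖ ^ 2) := by
  have hun : |⟪u, v⟫| ≤ ‖u‖ * ‖v‖ := abs_real_inner_le_norm u v
  have hvn : |x| ≤ ‖v‖ * ‖n‖ := hx.trans (abs_real_inner_le_norm v n)
  calc |⟪u, v⟫ * x| ≤ ‖u‖ * ‖v‖ * (‖v‖ * ‖n‖) := by
        rw [abs_mul]; exact mul_le_mul hun hvn (abs_nonneg x) (by positivity)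
    _ = ‖u‖ * ‖n‖ * ‖v‖ ^ 2 := by ring
    _ ≤ ‖u‖ * ‖n‖ * (1 + ‖v‖ ^ 2) := by gcongr; linarith

theorem integrable_inner_mul_comp_inner_mul [MeasurableSpace E] [BorelSpace E] {μ : Measure E}
    {φ : ℝ → ℝ} (hφ : Continuous φ) (hφ_le : ∀ x, |φ x| ≤ |x|) (u n : E) {F : E → ℝ}
    (hFm : AEStronglyMeasurable F μ) (hFint : Integrable (fun v => F v * (1 + ‖v‖ ^ 2)) μ) :
    Integrable (fun v => ⟪u, v⟫ * φ ⟪v, n⟫ * F v) μ :=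
  hFint.mul_of_abs_le_mul_one_add_sq hFm
    (by fun_prop : Continuous fun v => ⟪u, v⟫ * φ ⟪v, n⟫).aestronglyMeasurable
    fun v => abs_inner_mul_le_mul_one_add_sq u n v (hφ_le _)

theorem integrable_inner_mul_max_mul [MeasurableSpace E] [BorelSpace E] {μ : Measure E}
    (u n : E) {F : E → ℝ} (hFm : AEStronglyMeasurable F μ)
    (hFint : Integrable (fun v => F v * (1 + ‖v‖ ^ 2)) μ) :
    Integrable (fun v => ⟪u, v⟫ * max ⟪v, n⟫ 0 * F v) μ :=
  integrable_inner_mul_comp_inner_mul (φ := fun x => max x 0) (by fun_prop)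
    (fun x => by rcases le_total x 0 with h | h <;> simp [h, abs_of_nonneg]) u n hFm hFint

theorem integrable_inner_mul_min_mul [MeasurableSpace E] [BorelSpace E] {μ : Measure E}
    (u n : E) {F : E → ℝ} (hFm : AEStronglyMeasurable F μ)
    (hFint : Integrable (fun v => F v * (1 + ‖v‖ ^ 2)) μ) :
    Integrable (fun v => ⟪u, v⟫ * min ⟪v, n⟫ 0 * F v) μ :=
  integrable_inner_mul_comp_inner_mul (φ := fun x => min x 0) (by fun_prop)
    (fun x => by rcases le_total x 0 with h | h <;> simp [h, abs_of_nonneg]) u n hFm hFint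

theorem inner_mul_min_mul_comp_reflection {n u : E} (hu : ⟪u, n⟫ = 0) (F : E → ℝ) (v : E) :
    ⟪u, v⟫ * min ⟪v, n⟫ 0 * F ((ℝ ∙ n)ᗮ.reflection v)
      = -(⟪u, (ℝ ∙ n)ᗮ.reflection v⟫ * max ⟪(ℝ ∙ n)ᗮ.reflection v, n⟫ 0
          * F ((ℝ ∙ n)ᗮ.reflection v)) := by
  have hn_mem : n ∈ (ℝ ∙ n)ᗮᗮ :=
    Submodule.le_orthogonal_orthogonal _ (Submodule.mem_span_singleton_self n)
  have hu_mem : u ∈ (ℝ ∙ n)ᗮ := Submodule.mem_orthogonal_singleton_iff_inner_left.2 hu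
  rw [real_inner_comm ((ℝ ∙ n)ᗮ.reflection v) u, Submodule.inner_reflection_left_of_mem _ hu_mem,
    real_inner_comm u v, Submodule.inner_reflection_left_of_mem_orthogonal _ hn_mem,
    ← neg_zero, max_neg_neg, neg_zero]
  ring

variable [FiniteDimensional ℝ E] [MeasurableSpace E] [BorelSpace E]

theorem MeasureTheory.integral_eq_zero_of_comp_linearIsometryEquiv_eq_neg (S : E ≃ₗᵢ[ℝ] E)
    {g : E → ℝ} (hg : ∀ v, g (S v) = -g v) : ∫ v, g v = 0 := by
  have h := integral_comp S g
  simp only [hg, integral_neg] at h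
  linarith

theorem integral_inner_mul_eq_zero_of_reflection_invariant (u : E) {H : E → ℝ}
    (hH : ∀ v, H ((ℝ ∙ u)ᗮ.reflection v) = H v) : ∫ v, ⟪u, v⟫ * H v = 0 := by
  refine integral_eq_zero_of_comp_linearIsometryEquiv_eq_neg (ℝ ∙ u)ᗮ.reflection fun v => ?_
  rw [hH, real_inner_comm, Submodule.inner_reflection_left_of_mem_orthogonal _
    (Submodule.le_orthogonal_orthogonal _ (Submodule.mem_span_singleton_self u)), real_inner_comm,
    neg_mul]

theorem integrable_inner_mul_min_mul_comp_reflection {n u : E} (hu : ⟪u, n⟫ = 0) {F : E → ℝ}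
    (hFm : AEStronglyMeasurable F) (hFint : Integrable fun v => F v * (1 + ‖v‖ ^ 2)) :
    Integrable fun v => ⟪u, v⟫ * min ⟪v, n⟫ 0 * F ((ℝ ∙ n)ᗮ.reflection v) := by
  simp_rw [inner_mul_min_mul_comp_reflection hu]
  exact ((integrable_comp _ _).2 (integrable_inner_mul_max_mul u n hFm hFint)).neg

theorem integral_inner_mul_min_mul_comp_reflection {n u : E} (hu : ⟪u, n⟫ = 0) (F : E → ℝ) :
    ∫ v, ⟪u, v⟫ * min ⟪v, n⟫ 0 * F ((ℝ ∙ n)ᗮ.reflection v)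
      = -∫ v, ⟪u, v⟫ * max ⟪v, n⟫ 0 * F v := by
  simp_rw [inner_mul_min_mul_comp_reflection hu]
  rw [integral_neg, integral_comp _ fun v => ⟪u, v⟫ * max ⟪v, n⟫ 0 * F v]

theorem integral_inner_mul_min_mul_eq_zero_of_isometry_invariant {n u : E} (hu : ⟪u, n⟫ = 0)
    {G : E → ℝ} (hG : ∀ (S : E ≃ₗᵢ[ℝ] E) v, G (S v) = G v) :
    ∫ v, ⟪u, v⟫ * (min ⟪v, n⟫ 0 * G v) = 0 := by
  have hn_mem : n ∈ (ℝ ∙ u)ᗮ :=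
    Submodule.mem_orthogonal_singleton_iff_inner_right.2 hu
  refine integral_inner_mul_eq_zero_of_reflection_invariant u fun v => ?_
  rw [Submodule.inner_reflection_left_of_mem _ hn_mem, hG]

theorem integral_inner_mul_min_mul_eq_of_accommodation {n u : E} (hn : ‖n‖ = 1) (hu : ⟪u, n⟫ = 0)
    {F G : E → ℝ} (hFm : AEStronglyMeasurable F) (hFint : Integrable fun v => F v * (1 + ‖v‖ ^ 2))
    (hG : ∀ (S : E ≃ₗᵢ[ℝ] E) v, G (S v) = G v) {α β : ℝ}
    (hacc : ∀ᵐ v, ⟪v, n⟫ < 0 → F v = (1 - α) * F (v - (2 * ⟪v, n⟫) • n) + β * G v) :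
    ∫ v, ⟪u, v⟫ * min ⟪v, n⟫ 0 * F v = -(1 - α) * ∫ v, ⟪u, v⟫ * max ⟪v, n⟫ 0 * F v := by
  set R := (ℝ ∙ n)ᗮ.reflection
  have hbalance : (fun v => ⟪u, v⟫ * min ⟪v, n⟫ 0 * F v
        - (1 - α) * (⟪u, v⟫ * min ⟪v, n⟫ 0 * F (R v)))
      =ᵐ[volume] fun v => β * (⟪u, v⟫ * (min ⟪v, n⟫ 0 * G v)) := by
    filter_upwards [hacc] with v hv
    rcases lt_or_ge ⟪v, n⟫ 0 with hneg | hnonneg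
    · rw [hv hneg, Submodule.reflection_orthogonal_singleton_apply_of_norm_eq_one hn]
      ring
    · rw [min_eq_right hnonneg]
      ring
  calc ∫ v, ⟪u, v⟫ * min ⟪v, n⟫ 0 * F v
      = (∫ v, ⟪u, v⟫ * min ⟪v, n⟫ 0 * F v - (1 - α) * (⟪u, v⟫ * min ⟪v, n⟫ 0 * F (R v)))
        + (1 - α) * ∫ v, ⟪u, v⟫ * min ⟪v, n⟫ 0 * F (R v) := by
        rw [integral_sub (integrable_inner_mul_min_mul u n hFm hFint)
          ((integrable_inner_mul_min_mul_comp_reflection hu hFm hFint).const_mul _),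
          integral_const_mul]
        ring
    _ = -(1 - α) * ∫ v, ⟪u, v⟫ * max ⟪v, n⟫ 0 * F v := by
        rw [integral_congr_ae hbalance, integral_const_mul,
          integral_inner_mul_min_mul_eq_zero_of_isometry_invariant hu hG,
          integral_inner_mul_min_mul_comp_reflection hu]
        ring

theorem gaussM_linearIsometryEquiv {N : ℕ}
    (S : EuclideanSpace ℝ (Fin N) ≃ₗᵢ[ℝ] EuclideanSpace ℝ (Fin N)) (v : EuclideanSpace ℝ (Fin N)) :
    gaussM (S v) = gaussM v := by
  simp only [gaussM, S.norm_map]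

theorem accommodation_tangential_momentum_flux_general {N : ℕ}
    (n : EuclideanSpace ℝ (Fin N)) (hn : ‖n‖ = 1)
    (α : ℝ)
    (u : EuclideanSpace ℝ (Fin N)) (hu : ⟪u, n⟫ = 0)
    (F : EuclideanSpace ℝ (Fin N) → ℝ) (hFmeas : Measurable F)
    (hFint : Integrable fun v => F v * (1 + ‖v‖ ^ 2))
    (hacc : ∀ᵐ v : EuclideanSpace ℝ (Fin N), ⟪v, n⟫ < 0 →
      F v = (1 - α) * F (v - (2 * ⟪v, n⟫) • n)
        + α * (Real.sqrt (2 * π) * ∫ w, F w * max ⟪w, n⟫ 0) * gaussM v) :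
    (∫ v, ⟪u, v⟫ * ⟪v, n⟫ * F v) = α * ∫ v, ⟪u, v⟫ * max ⟪v, n⟫ 0 * F v := by
  have hFm : AEStronglyMeasurable F := hFmeas.aestronglyMeasurable
  have hsplit : ∀ v, ⟪u, v⟫ * ⟪v, n⟫ * F v
      = ⟪u, v⟫ * max ⟪v, n⟫ 0 * F v + ⟪u, v⟫ * min ⟪v, n⟫ 0 * F v := fun v => by
    rw [← add_mul, ← mul_add, max_add_min, add_zero]
  simp_rw [hsplit]
  rw [integral_add (integrable_inner_mul_max_mul u n hFm hFint)
      (integrable_inner_mul_min_mul u n hFm hFint),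
    integral_inner_mul_min_mul_eq_of_accommodation hn hu hFm hFint gaussM_linearIsometryEquiv hacc]
  ring

/-- If a nonnegative distribution `F` with `∫ F(v)(1+|v|²) dv < ∞` satisfies
Maxwell's accommodation condition at a boundary point with outward unit normal `n`
and accommodation parameter `α ∈ [0,1]`, and `u` is tangential (`u·n = 0`), then the
tangential momentum flux reduces to `α` times its outgoing part:
`∫ (u·v)(v·n) F(v) dv = α ∫ (u·v)(v·n)₊ F(v) dv`. -/
theorem accommodation_tangential_momentum_flux {N : ℕ}
    (n : EuclideanSpace ℝ (Fin N)) (hn : ‖n‖ = 1)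
    (α : ℝ) (hα : α ∈ Set.Icc (0 : ℝ) 1)
    (u : EuclideanSpace ℝ (Fin N)) (hu : ⟪u, n⟫ = 0)
    (F : EuclideanSpace ℝ (Fin N) → ℝ) (hFmeas : Measurable F)
    (hFnonneg : ∀ v, 0 ≤ F v)
    (hFint : Integrable fun v => F v * (1 + ‖v‖ ^ 2))
    (hacc : ∀ᵐ v : EuclideanSpace ℝ (Fin N), ⟪v, n⟫ < 0 →
      F v = (1 - α) * F (v - (2 * ⟪v, n⟫) • n)
        + α * (Real.sqrt (2 * π) * ∫ w, F w * max ⟪w, n⟫ 0) * gaussM v) :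
    (∫ v, ⟪u, v⟫ * ⟪v, n⟫ * F v) = α * ∫ v, ⟪u, v⟫ * max ⟪v, n⟫ 0 * F v :=
  accommodation_tangential_momentum_flux_general n hn α u hu F hFmeas hFint hacc
end
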